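/- Let d = (d_1, …, d_n) be a graphic list and let h be an extreme point of P(d). Then the graph on vertex set {1,…,n} whose edges are the pairs {i,j} with h_{ij} ∉ {0,1} (which is a disjoint union of odd cycles) has an even number of cycles; equivalently, the number of connected components of this graph containing at least one edge is even. -/

import Mathlib

open Finset

/-- The polytope `P(d)` of fractional realizations: symmetric arrays with zero
diagonal, off-diagonal entries in `[0,1]`, whose row sums equal the degrees. -/
def degreePolytope {n : ℕ} (d : Fin n → ℕ) : Set (Fin n → Fin n → ℝ) :=
  {x | (∀ i j, x i j = x j i) ∧ (∀ i, x i i = 0) ∧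
       (∀ i j, 0 ≤ x i j ∧ x i j ≤ 1) ∧
       (∀ j, ∑ i, x i j = d j)}

/-- `G` is a realization of the degree list `d`. -/
def IsRealization {n : ℕ} (d : Fin n → ℕ) (G : SimpleGraph (Fin n)) : Prop :=
  ∀ i, {j | G.Adj i j}.ncard = d i

/-- `d` is graphic: it is the degree sequence of a simple graph. -/
def Graphic {n : ℕ} (d : Fin n → ℕ) : Prop :=
  ∃ G : SimpleGraph (Fin n), IsRealization d G

/-- `d` is decisive: every extreme point of `P(d)` has all coordinates in `{0,1}`. -/
def Decisive {n : ℕ} (d : Fin n → ℕ) : Prop :=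
  ∀ x ∈ Set.extremePoints ℝ (degreePolytope d), ∀ i j, x i j = 0 ∨ x i j = 1

/-- The graph whose edges are the pairs with nonintegral label. -/
def nonIntegralGraph {n : ℕ} (h : Fin n → Fin n → ℝ) : SimpleGraph (Fin n) :=
  SimpleGraph.fromRel fun i j => h i j ∉ ({0, 1} : Set ℝ)

/-- A `(3,3)`-blossom in `G`. -/
def Has33Blossom {V : Type*} (G : SimpleGraph V) : Prop :=
  ∃ v1 v2 v3 w1 w2 w3 : V,
    [v1, v2, v3, w1, w2, w3].Pairwise (· ≠ ·) ∧
    ((G.Adj v1 v2 ∧ ¬G.Adj v2 v3 ∧ G.Adj v3 v1 ∧ ¬G.Adj v1 w1 ∧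
      G.Adj w1 w2 ∧ ¬G.Adj w2 w3 ∧ G.Adj w3 w1) ∨
     (¬G.Adj v1 v2 ∧ G.Adj v2 v3 ∧ ¬G.Adj v3 v1 ∧ G.Adj v1 w1 ∧
      ¬G.Adj w1 w2 ∧ G.Adj w2 w3 ∧ ¬G.Adj w3 w1))

/-- A `(k,ℓ)`-blossom in `G`: cycles `v`, `w` with connecting pair `v 0, w 0`,
with the `k + ℓ + 1` pairs alternately edges and non-edges (phase `b`). -/
def HasKLBlossom {V : Type*} (G : SimpleGraph V) (k l : ℕ) : Prop :=
  ∃ (v : ZMod k → V) (w : ZMod l → V) (b : Bool),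
    Function.Injective (Sum.elim v w) ∧
    (∀ i : ZMod k, G.Adj (v i) (v (i + 1)) ↔ (Even i.val ↔ b = true)) ∧
    (G.Adj (v 0) (w 0) ↔ b = false) ∧
    (∀ i : ZMod l, G.Adj (w i) (w (i + 1)) ↔ (Even i.val ↔ b = true))

/-- The 24 forbidden degree multisets of the family `B`. -/
def BDegSeqs : Set (Multiset ℕ) :=
  {{1,1,1,1,1,1}, {2,2,1,1,1,1}, {2,2,2,2,1,1}, {2,2,2,2,2,2},
   {3,2,2,1,1,1}, {3,2,2,2,2,1}, {3,3,2,2,1,1}, {3,3,2,2,2,2},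
   {3,3,3,2,2,1}, {3,3,3,3,1,1}, {3,3,3,3,2,2}, {3,3,3,3,3,3},
   {4,2,2,2,1,1}, {4,3,2,2,2,1}, {4,3,3,2,2,2}, {4,3,3,3,2,1},
   {4,3,3,3,3,2}, {4,4,2,2,2,2}, {4,4,3,3,2,2}, {4,4,3,3,3,1},
   {4,4,3,3,3,3}, {4,4,4,3,3,2}, {4,4,4,4,3,3}, {4,4,4,4,4,4}}

/-- `G` is `B`-free: no six vertices induce a subgraph whose degree multiset is
one of the 24 forbidden degree sequences (equivalently, no induced subgraph is
isomorphic to a member of `B`, since `B` consists of all realizations of them). -/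
def BFree {V : Type*} (G : SimpleGraph V) : Prop :=
  ∀ s : Finset V, s.card = 6 →
    (s.val.map fun v => {u | u ∈ s ∧ G.Adj v u}.ncard) ∉ BDegSeqs

/-- `A` is an independent set in `G`. -/
def IndepOn {V : Type*} (G : SimpleGraph V) (A : Set V) : Prop :=
  ∀ a ∈ A, ∀ b ∈ A, ¬G.Adj a b

/-- `B` is a clique in `G`. -/
def CliqueOn {V : Type*} (G : SimpleGraph V) (B : Set V) : Prop :=
  ∀ a ∈ B, ∀ b ∈ B, a ≠ b → G.Adj a b

/-- `G` is a split graph. -/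
def IsSplit {V : Type*} (G : SimpleGraph V) : Prop :=
  ∃ A B : Set V, A ∪ B = Set.univ ∧ Disjoint A B ∧ IndepOn G A ∧ CliqueOn G B

/-- Partition of the vertices into an independent set `V1`, a clique `V2`, and a set
`V3` each of whose vertices is adjacent to all of `V2` and none of `V1`. -/
def GoodPartition {V : Type*} (G : SimpleGraph V) (V1 V2 V3 : Set V) : Prop :=
  V1 ∪ V2 ∪ V3 = Set.univ ∧ Disjoint V1 V2 ∧ Disjoint V1 V3 ∧ Disjoint V2 V3 ∧
  IndepOn G V1 ∧ CliqueOn G V2 ∧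
  (∀ v ∈ V3, ∀ u ∈ V2, G.Adj v u) ∧ (∀ v ∈ V3, ∀ u ∈ V1, ¬G.Adj v u)

/-- `G` is decomposable. -/
def Decomposable {V : Type*} (G : SimpleGraph V) : Prop :=
  ∃ V1 V2 V3 : Set V, GoodPartition G V1 V2 V3 ∧ (V1 ∪ V2).Nonempty ∧ V3.Nonempty

def Indecomposable {V : Type*} (G : SimpleGraph V) : Prop := ¬Decomposable G

/-- The graph `U`, the unique realization of `(4,2,2,2,2,2)`:
vertices `u=0, a=1, b=2, c=3, d=4, e=5`, edges `ua, ub, uc, ud, ea, eb, cd`. -/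
def graphU : SimpleGraph (Fin 6) :=
  SimpleGraph.fromRel fun i j =>
    (i, j) ∈ [((0 : Fin 6), (1 : Fin 6)), (0,2), (0,3), (0,4), (5,1), (5,2), (3,4)]

/-- `K_2 + K_{1,m}`: disjoint union of an edge and a star with `m` leaves
(star center `Sum.inr 0`). -/
def graphK2PlusStar (m : ℕ) : SimpleGraph (Fin 2 ⊕ Fin (m + 1)) :=
  SimpleGraph.fromRel fun x y =>
    (x = Sum.inl 0 ∧ y = Sum.inl 1) ∨
    (x = Sum.inr 0 ∧ ∃ j : Fin (m + 1), j ≠ 0 ∧ y = Sum.inr j)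

/-- `(K_m + K_1) ∨ 2K_1`: the join of (`K_m` plus an isolated vertex)
with two nonadjacent vertices. -/
def graphKmK1Join (m : ℕ) : SimpleGraph (Fin (m + 1) ⊕ Fin 2) :=
  SimpleGraph.fromRel fun x y =>
    (∃ i j : Fin (m + 1), (i : ℕ) < m ∧ (j : ℕ) < m ∧ i ≠ j ∧
      x = Sum.inl i ∧ y = Sum.inl j) ∨
    (∃ i : Fin (m + 1), ∃ j : Fin 2, x = Sum.inl i ∧ y = Sum.inr j)

/-- The 5-cycle `C_5`. -/
def graphC5 : SimpleGraph (Fin 5) :=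
  SimpleGraph.fromRel fun i j =>
    (i, j) ∈ [((0 : Fin 5), (1 : Fin 5)), (1,2), (2,3), (3,4), (4,0)]

/-- The path `P_5` on five vertices. -/
def graphP5 : SimpleGraph (Fin 5) :=
  SimpleGraph.fromRel fun i j =>
    (i, j) ∈ [((0 : Fin 5), (1 : Fin 5)), (1,2), (2,3), (3,4)]

/-- The house graph: the complement of `P_5`. -/
def graphHouse : SimpleGraph (Fin 5) := graphP5ᶜ

/-- `K_2 + K_3`: disjoint union of an edge and a triangle. -/
def graphK2PlusK3 : SimpleGraph (Fin 5) :=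
  SimpleGraph.fromRel fun i j =>
    (i, j) ∈ [((0 : Fin 5), (1 : Fin 5)), (2,3), (3,4), (4,2)]

/-- The complete bipartite graph `K_{2,3}` with parts `{0,1}` and `{2,3,4}`. -/
def graphK23 : SimpleGraph (Fin 5) :=
  SimpleGraph.fromRel fun i j =>
    (i, j) ∈ [((0 : Fin 5), (2 : Fin 5)), (0,3), (0,4), (1,2), (1,3), (1,4)]

/-- Condition (iii) of the structure theorem for the part `V3`. -/
def SpecialPart {V : Type*} (G : SimpleGraph V) (V3 : Set V) : Prop :=
  IsSplit (G.induce V3) ∨ V3.ncard < 6 ∨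
  Nonempty (G.induce V3 ≃g graphU) ∨ Nonempty (G.induce V3 ≃g graphUᶜ) ∨
  (∃ m, 3 ≤ m ∧ Nonempty (G.induce V3 ≃g graphK2PlusStar m)) ∨
  (∃ m, 3 ≤ m ∧ Nonempty (G.induce V3 ≃g graphKmK1Join m))

/-- The structure described in Theorem 4(4). -/
def HasGoodStructure {V : Type*} (G : SimpleGraph V) : Prop :=
  ∃ V1 V2 V3 : Set V, GoodPartition G V1 V2 V3 ∧ SpecialPart G V3

/-!
At an extreme point `h` of `P(d)`, the only perturbation of `h` that is supported on the
fractional entries, symmetric, and has zero column sums is `0`: the unsigned incidence map of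
the fractional graph `F` is injective on edge weights. Hence `F` has no more edges than
non-isolated vertices. Column sums are integers, so no vertex carries exactly one fractional
entry; together with the edge count this makes `F` a disjoint union of cycles. An even cycle
would carry the alternating `±1` perturbation, so every cycle is odd. Finally every
non-isolated vertex has fractional column sum `1`, so summing the degree conditions gives
`∑ d = 2 #{h = 1} + #V(F)`; as `d` is graphic, `#V(F)` is even, and a sum of odd cycle
lengths is even only for an even number of cycles.
-/

open Filter Topology

lemma sum_ite_mk_eq_mk {V : Type*} [Fintype V] [DecidableEq V] {a b : V} (hab : a ≠ b)
    (v : V) (c : ℝ) :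
    ∑ u, (if s(a, b) = s(u, v) then c else 0) =
      (if a = v then c else 0) + (if b = v then c else 0) := by
  by_cases hav : a = v
  · subst hav
    simp [hab.symm]
  · by_cases hbv : b = v
    · subst hbv
      simp [hav]
    · simp [hav, hbv]

theorem eq_zero_of_add_mem_of_sub_mem_of_mem_extremePoints {𝕜 E : Type*} [Field 𝕜]
    [LinearOrder 𝕜] [IsStrictOrderedRing 𝕜] [AddCommGroup E] [Module 𝕜 E] {A : Set E} {x v : E}
    (hx : x ∈ A.extremePoints 𝕜) (hplus : x + v ∈ A) (hminus : x - v ∈ A) : v = 0 := by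
  have hmid : x ∈ openSegment 𝕜 (x + v) (x - v) :=
    ⟨1 / 2, 1 / 2, by norm_num, by norm_num, by norm_num, by module⟩
  simpa using ((mem_extremePoints.mp hx).2 _ hplus _ hminus hmid).1

namespace SimpleGraph

variable {V : Type*} {G : SimpleGraph V}

/-- Injectivity of the unsigned incidence map `ℝ^E → ℝ^V`, with edge weights encoded as
functions on `Sym2 V` vanishing off `G.edgeSet`. -/
def IncidenceInjective [Fintype V] (G : SimpleGraph V) : Prop :=
  ∀ y : Sym2 V → ℝ, (∀ e ∉ G.edgeSet, y e = 0) → (∀ v, ∑ u, y s(u, v) = 0) → y = 0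

lemma ncard_neighborSet_eq_degree [Fintype V] [DecidableRel G.Adj] (v : V) :
    (G.neighborSet v).ncard = G.degree v := by
  rw [← Nat.card_coe_set_eq, Nat.card_eq_fintype_card, card_neighborSet_eq_degree]

theorem isCycles_of_card_edgeSet_le [Fintype V] (hdeg : ∀ v, (G.neighborSet v).ncard ≠ 1)
    (hcard : Nat.card G.edgeSet ≤ Nat.card G.support) : G.IsCycles := by
  classical
  let S : Finset V := {v | 0 < G.degree v}
  have hS : Nat.card G.support = #S := by
    rw [Nat.card_eq_card_toFinset]
    congr 1
    ext v
    simp [S, degree_pos_iff_mem_support]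
  have htwo : ∀ v ∈ S, 2 ≤ G.degree v := by
    intro v hv
    have := hdeg v
    rw [ncard_neighborSet_eq_degree] at this
    have := (mem_filter.mp hv).2
    omega
  have hsum : ∑ v ∈ S, G.degree v = ∑ v ∈ S, 2 := by
    refine le_antisymm ?_ (sum_le_sum htwo)
    calc ∑ v ∈ S, G.degree v = ∑ v, G.degree v :=
          sum_subset (subset_univ _) fun v _ hv => by simpa [S] using hv
      _ = 2 * #G.edgeFinset := sum_degrees_eq_twice_card_edges G
      _ ≤ ∑ v ∈ S, 2 := by
          rw [sum_const, smul_eq_mul, mul_comm, ← hS, edgeFinset_card,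
            ← Nat.card_eq_fintype_card]
          omega
  intro v hv
  rw [ncard_neighborSet_eq_degree]
  exact ((sum_eq_sum_iff_of_le htwo).mp hsum.symm v
    (by simpa [S] using G.degree_pos_iff_nonempty.mpr hv)).symm

theorem IncidenceInjective.card_edgeSet_le [Fintype V] (hG : G.IncidenceInjective) :
    Nat.card G.edgeSet ≤ Nat.card G.support := by
  classical
  let ext := Function.ExtendByZero.linearMap ℝ (Subtype.val : G.edgeSet → Sym2 V)
  let vertexSums : (Sym2 V → ℝ) →ₗ[ℝ] V → ℝ :=
    LinearMap.pi fun v => ∑ u, LinearMap.proj s(u, v)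
  let L := LinearMap.funLeft ℝ ℝ (Subtype.val : G.support → V) ∘ₗ vertexSums ∘ₗ ext
  have hext : ∀ y, ∀ e ∉ G.edgeSet, ext y e = 0 := by
    intro y e he
    exact Function.extend_apply' _ _ _ fun ⟨e', he'⟩ => he (he' ▸ e'.2)
  have hL : Function.Injective L := by
    rw [← LinearMap.ker_eq_bot, LinearMap.ker_eq_bot']
    intro y hy
    have hbal : ∀ v, ∑ u, ext y s(u, v) = 0 := by
      intro v
      by_cases hv : v ∈ G.support
      · simpa [L, vertexSums] using congrFun hy ⟨v, hv⟩
      · refine sum_eq_zero fun u _ => hext y _ fun hadj => hv ?_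
        exact ⟨u, hadj.symm⟩
    have h0 := hG _ (hext y) hbal
    funext e
    simpa [ext, Subtype.val_injective.extend_apply] using congrFun h0 e.1
  have := LinearMap.finrank_le_finrank_of_injective hL
  simpa [Module.finrank_fintype_fun_eq_card, Nat.card_eq_fintype_card] using this

theorem IncidenceInjective.odd_length_of_isTrail [Fintype V] (hG : G.IncidenceInjective)
    {u : V} {p : G.Walk u u} (hp : p.IsTrail) (hnil : ¬ p.Nil) : Odd p.length := by
  classical
  by_contra heven
  rw [Nat.not_odd_iff_even] at heven
  set x := p.getVert
  -- alternating weights along the trail: the vertex sums telescope, and vanish because the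
  -- trail is closed of even length
  let y : Sym2 V → ℝ := fun e =>
    ∑ k ∈ range p.length, if s(x k, x (k + 1)) = e then (-1) ^ k else 0
  have hsupp : ∀ e ∉ G.edgeSet, y e = 0 := by
    intro e he
    refine sum_eq_zero fun k hk => if_neg ?_
    rintro rfl
    exact he (p.adj_getVert_succ (mem_range.mp hk))
  have hbal : ∀ v, ∑ w, y s(w, v) = 0 := by
    intro v
    let g : ℕ → ℝ := fun k => if x k = v then (-1) ^ k else 0
    calc ∑ w, y s(w, v)
        = ∑ k ∈ range p.length, ∑ w,
            if s(x k, x (k + 1)) = s(w, v) then (-1 : ℝ) ^ k else 0 :=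
          sum_comm
      _ = ∑ k ∈ range p.length, (g k - g (k + 1)) := by
          refine sum_congr rfl fun k hk => ?_
          rw [sum_ite_mk_eq_mk (p.adj_getVert_succ (mem_range.mp hk)).ne]
          simp only [g, pow_succ]
          split_ifs <;> ring
      _ = 0 := by
          rw [sum_range_sub']
          simp [g, x, heven.neg_one_pow]
  have hlen : 0 < p.length := Walk.not_nil_iff_lt_length.mp hnil
  have hy1 : y s(x 0, x 1) = 1 := by
    simp only [y]
    rw [sum_eq_single_of_mem 0 (mem_range.mpr hlen)]
    · simp
    · intro k hk hk0
      refine if_neg ?_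
      rw [← Walk.getElem_edges (by simpa using hk), ← Walk.getElem_edges (by simpa using hlen)]
      exact fun h => hk0 ((hp.edges_nodup.getElem_inj_iff).mp h)
  exact one_ne_zero (hy1.symm.trans (congrFun (hG y hsupp hbal) _))

lemma Walk.IsCycle.ncard_verts_toSubgraph {u : V} {p : G.Walk u u} (hp : p.IsCycle) :
    p.toSubgraph.verts.ncard = p.length := by
  classical
  have hverts : p.toSubgraph.verts = ↑p.support.tail.toFinset := by
    ext w
    rw [Walk.mem_verts_toSubgraph, List.coe_toFinset, Set.mem_ofPred_eq]
    refine ⟨fun hw => ?_, List.mem_of_mem_tail⟩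
    rw [← p.cons_tail_support] at hw
    rcases List.mem_cons.mp hw with rfl | hw
    exacts [Walk.end_mem_tail_support hp.not_nil, hw]
  rw [hverts, Set.ncard_coe_finset, List.toFinset_card_of_nodup hp.support_nodup,
    List.length_tail, Walk.length_support, Nat.add_sub_cancel]

lemma IsCycles.odd_ncard_supp [Finite V] (hcyc : G.IsCycles)
    (hodd : ∀ ⦃u⦄ (p : G.Walk u u), p.IsCycle → Odd p.length) {v w : V} (hadj : G.Adj v w) :
    Odd (G.connectedComponentMk v).supp.ncard := by
  obtain ⟨p, hp, hverts⟩ :=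
    hcyc.exists_cycle_toSubgraph_verts_eq_connectedComponentSupp rfl ⟨w, hadj⟩
  rw [← hverts, hp.ncard_verts_toSubgraph]
  exact hodd p hp

lemma even_ncard_components_with_edge_iff [Fintype V]
    (hodd : ∀ v w, G.Adj v w → Odd (G.connectedComponentMk v).supp.ncard) :
    Even {C : G.ConnectedComponent | ∃ v w, G.Adj v w ∧ G.connectedComponentMk v = C}.ncard ↔
      Even G.support.ncard := by
  classical
  let T := G.support.toFinset
  have himage : {C : G.ConnectedComponent | ∃ v w, G.Adj v w ∧ G.connectedComponentMk v = C}
      = ↑(T.image G.connectedComponentMk) := by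
    ext C
    simp [T, mem_support]
  have hfiber : ∀ C ∈ T.image G.connectedComponentMk,
      Odd #{v ∈ T | G.connectedComponentMk v = C} := by
    simp only [mem_image]
    rintro C ⟨v, hv, rfl⟩
    obtain ⟨w, hw⟩ := G.mem_support.mp (Set.mem_toFinset.mp hv)
    convert hodd v w hw using 1
    rw [← Set.ncard_coe_finset]
    congr 1
    ext u
    simp only [coe_filter, ConnectedComponent.mem_supp_iff, Set.mem_ofPred_eq,
      and_iff_right_iff_imp, T, Set.mem_toFinset]
    intro huv
    by_cases h : u = v
    · exact h ▸ ⟨w, hw⟩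
    · exact mem_support_of_reachable h (ConnectedComponent.exact huv)
  rw [himage, Set.ncard_coe_finset, Set.ncard_eq_toFinset_card' G.support,
    card_eq_sum_card_image G.connectedComponentMk T, even_sum_iff_even_card_odd,
    filter_true_of_mem hfiber]

end SimpleGraph

section DegreePolytope

variable {n : ℕ} {d : Fin n → ℕ} {h : Fin n → Fin n → ℝ}

def onesGraph (h : Fin n → Fin n → ℝ) : SimpleGraph (Fin n) :=
  SimpleGraph.fromRel fun i j => h i j = 1

lemma nonIntegralGraph_adj_iff (hmem : h ∈ degreePolytope d) {i j : Fin n} :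
    (nonIntegralGraph h).Adj i j ↔ 0 < h i j ∧ h i j < 1 := by
  obtain ⟨hsymm, hdiag, hbox, -⟩ := hmem
  have hfrac : ∀ i j, h i j ∉ ({0, 1} : Set ℝ) ↔ 0 < h i j ∧ h i j < 1 := fun i j => by
    rw [Set.mem_insert_iff, Set.mem_singleton_iff, (hbox i j).1.lt_iff_ne',
      (hbox i j).2.lt_iff_ne]
    tauto
  rw [nonIntegralGraph, SimpleGraph.fromRel_adj, hfrac, hfrac, hsymm j i, or_self,
    and_iff_right_iff_imp]
  rintro hij rfl
  exact hij.1.ne' (hdiag i)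

lemma onesGraph_adj_iff (hmem : h ∈ degreePolytope d) {i j : Fin n} :
    (onesGraph h).Adj i j ↔ h i j = 1 := by
  obtain ⟨hsymm, hdiag, -, -⟩ := hmem
  rw [onesGraph, SimpleGraph.fromRel_adj, hsymm j i, or_self, and_iff_right_iff_imp]
  rintro hij rfl
  simp [hdiag] at hij

open scoped Classical in
lemma sum_neighborFinset_add_degree (hmem : h ∈ degreePolytope d) (v : Fin n) :
    ∑ u ∈ (nonIntegralGraph h).neighborFinset v, h u v + (onesGraph h).degree v = d v := by
  have hsplit : ∀ u, h u v = (if (nonIntegralGraph h).Adj v u then h u v else 0) +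
      if (onesGraph h).Adj v u then 1 else 0 := by
    intro u
    rw [nonIntegralGraph_adj_iff hmem, onesGraph_adj_iff hmem, hmem.1 v u]
    obtain ⟨h0, h1⟩ := hmem.2.2.1 u v
    split_ifs <;> grind
  rw [← hmem.2.2.2 v, Fintype.sum_congr _ _ hsplit, sum_add_distrib, ← sum_filter]
  simp [SimpleGraph.degree, SimpleGraph.neighborFinset_eq_filter]

open scoped Classical in
lemma degree_onesGraph_lt (hmem : h ∈ degreePolytope d) {v : Fin n}
    (hv : 0 < (nonIntegralGraph h).degree v) :
    (onesGraph h).degree v < d v ∧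
      d v < (onesGraph h).degree v + (nonIntegralGraph h).degree v := by
  have hsum := sum_neighborFinset_add_degree hmem v
  have hne : ((nonIntegralGraph h).neighborFinset v).Nonempty := by
    rwa [← card_pos, SimpleGraph.card_neighborFinset_eq_degree]
  have hbounds : ∀ u ∈ (nonIntegralGraph h).neighborFinset v, 0 < h u v ∧ h u v < 1 := by
    intro u hu
    rw [← hmem.1 v u, ← nonIntegralGraph_adj_iff hmem]
    exact (SimpleGraph.mem_neighborFinset _ _ _).mp hu
  have hpos := sum_pos (fun u hu => (hbounds u hu).1) hne
  have hlt := sum_lt_sum_of_nonempty hne (fun u hu => (hbounds u hu).2)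
  rw [sum_const, SimpleGraph.card_neighborFinset_eq_degree, nsmul_one] at hlt
  have h1 : ((onesGraph h).degree v : ℝ) < d v := by linarith
  have h2 : (d v : ℝ) < (onesGraph h).degree v + (nonIntegralGraph h).degree v := by linarith
  exact ⟨by exact_mod_cast h1, by exact_mod_cast h2⟩

lemma ncard_neighborSet_nonIntegralGraph_ne_one (hmem : h ∈ degreePolytope d) (v : Fin n) :
    ((nonIntegralGraph h).neighborSet v).ncard ≠ 1 := by
  classical
  rw [SimpleGraph.ncard_neighborSet_eq_degree]
  intro hv
  have := degree_onesGraph_lt hmem (v := v) (by omega)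
  omega

lemma even_ncard_support_nonIntegralGraph (hd : Graphic d) (hmem : h ∈ degreePolytope d)
    (hcyc : (nonIntegralGraph h).IsCycles) : Even (nonIntegralGraph h).support.ncard := by
  classical
  have hdeg : ∀ v,
      d v = (onesGraph h).degree v + if v ∈ (nonIntegralGraph h).support then 1 else 0 := by
    intro v
    split_ifs with hv
    · have h2 := hcyc hv
      rw [SimpleGraph.ncard_neighborSet_eq_degree] at h2
      have := degree_onesGraph_lt hmem (v := v) (by omega)
      omega
    · have hempty : (nonIntegralGraph h).neighborFinset v = ∅ := by
        ext u
        simpa using fun hadj => hv ⟨u, hadj⟩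
      have := sum_neighborFinset_add_degree hmem v
      rw [hempty, sum_empty, zero_add] at this
      exact_mod_cast this.symm
  obtain ⟨G, hG⟩ := hd
  have hsumG : ∑ v, d v = 2 * #G.edgeFinset := by
    rw [← G.sum_degrees_eq_twice_card_edges]
    exact sum_congr rfl fun v _ => (hG v).symm.trans (G.ncard_neighborSet_eq_degree v)
  have hsum :
      ∑ v, d v = 2 * #(onesGraph h).edgeFinset + (nonIntegralGraph h).support.ncard := by
    rw [Fintype.sum_congr _ _ hdeg, sum_add_distrib, SimpleGraph.sum_degrees_eq_twice_card_edges,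
      sum_boole, Set.ncard_eq_toFinset_card', Nat.cast_id]
    congr 2
    ext v
    simp
  exact ⟨#G.edgeFinset - #(onesGraph h).edgeFinset, by omega⟩

lemma eventually_add_smul_mem_degreePolytope (hmem : h ∈ degreePolytope d)
    {Y : Fin n → Fin n → ℝ} (hsymm : ∀ i j, Y i j = Y j i)
    (hsupp : ∀ i j, ¬(nonIntegralGraph h).Adj i j → Y i j = 0)
    (hcol : ∀ j, ∑ i, Y i j = 0) :
    ∀ᶠ ε in 𝓝 (0 : ℝ), h + ε • Y ∈ degreePolytope d := by
  have hbox : ∀ i j, ∀ᶠ ε in 𝓝 (0 : ℝ),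
      0 ≤ h i j + ε * Y i j ∧ h i j + ε * Y i j ≤ 1 := by
    intro i j
    by_cases hadj : (nonIntegralGraph h).Adj i j
    · obtain ⟨h0, h1⟩ := (nonIntegralGraph_adj_iff hmem).mp hadj
      have hlim : Tendsto (fun ε => h i j + ε * Y i j) (𝓝 0) (𝓝 (h i j + 0 * Y i j)) :=
        tendsto_const_nhds.add (tendsto_id.mul_const _)
      rw [zero_mul, add_zero] at hlim
      exact hlim.eventually (Icc_mem_nhds h0 h1)
    · simpa [hsupp i j hadj] using hmem.2.2.1 i j
  filter_upwards [eventually_all.2 fun i => eventually_all.2 (hbox i)] with ε hε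
  refine ⟨fun i j => ?_, fun i => ?_, hε, fun j => ?_⟩
  · simp [hmem.1 i j, hsymm i j]
  · simp [hmem.2.1 i, hsupp i i ((nonIntegralGraph h).loopless.irrefl i)]
  · simp [sum_add_distrib, ← mul_sum, hcol, hmem.2.2.2 j]

theorem incidenceInjective_nonIntegralGraph (hh : h ∈ (degreePolytope d).extremePoints ℝ) :
    (nonIntegralGraph h).IncidenceInjective := by
  intro y hsupp hbal
  let Y : Fin n → Fin n → ℝ := fun i j => y s(i, j)
  have hev := eventually_add_smul_mem_degreePolytope hh.1 (Y := Y)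
    (fun i j => by simp [Y, Sym2.eq_swap]) (fun i j hadj => hsupp _ hadj) hbal
  have hev' : ∀ᶠ ε in 𝓝 (0 : ℝ), h - ε • Y ∈ degreePolytope d := by
    filter_upwards [(tendsto_neg (0 : ℝ)).eventually (neg_zero (G := ℝ) ▸ hev)] with ε hε
    rwa [neg_smul, ← sub_eq_add_neg] at hε
  have hev'' : ∀ᶠ ε in 𝓝[≠] (0 : ℝ), (h + ε • Y ∈ degreePolytope d ∧
      h - ε • Y ∈ degreePolytope d) ∧ ε ≠ 0 :=
    ((hev.and hev').filter_mono nhdsWithin_le_nhds).and self_mem_nhdsWithin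
  obtain ⟨ε, ⟨hplus, hminus⟩, hε⟩ := hev''.exists
  have hY : Y = 0 := (smul_eq_zero.mp
    (eq_zero_of_add_mem_of_sub_mem_of_mem_extremePoints hh hplus hminus)).resolve_left hε
  funext e
  induction e using Sym2.ind with
  | _ i j => exact congrFun (congrFun hY i) j

end DegreePolytope

/-- the graph of nonintegrally-labeled pairs at an extreme point of `P(d)`
has an even number of connected components containing at least one edge. -/
theorem extremePoint_even_number_of_odd_cycles {n : ℕ} (d : Fin n → ℕ)
    (hd : Graphic d) (h : Fin n → Fin n → ℝ)
    (hh : h ∈ Set.extremePoints ℝ (degreePolytope d)) :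
    Even {C : (nonIntegralGraph h).ConnectedComponent |
      ∃ v w, (nonIntegralGraph h).Adj v w ∧
        (nonIntegralGraph h).connectedComponentMk v = C}.ncard := by
  have hinj := incidenceInjective_nonIntegralGraph hh
  have hcyc : (nonIntegralGraph h).IsCycles := SimpleGraph.isCycles_of_card_edgeSet_le
    (ncard_neighborSet_nonIntegralGraph_ne_one hh.1) hinj.card_edgeSet_le
  have hodd : ∀ v w, (nonIntegralGraph h).Adj v w →
      Odd ((nonIntegralGraph h).connectedComponentMk v).supp.ncard := fun _ _ hadj =>
    hcyc.odd_ncard_supp (fun _ p hp => hinj.odd_length_of_isTrail hp.isTrail hp.not_nil) hadj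
  rw [SimpleGraph.even_ncard_components_with_edge_iff hodd]
  exact even_ncard_support_nonIntegralGraph hd hh.1 hcyc
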